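/- arXiv:2202.09187 — 4 statements merged into one kernel-verified Lean document; each statement's English description precedes it below -/
import Mathlib

section
/- Let n ≥ 1, A ∈ O^±(n,n,ℤ), and define η_A : ℝ^{2n} × ℝ^{2n} → ℝ/ℤ by η_A(a,a') := aᵀ·(B_A)_low·a' mod ℤ. Then the pair (A, η_A) satisfies the object axioms: (A1) η_A(m,m') = 0 for all m, m' ∈ ℤ^{2n}; (A2) η_A(m,a) + iso(A)·(aᵀJm mod ℤ) = η_A(a,m) + ((Aa)ᵀJ(Am) mod ℤ) in ℝ/ℤ for all m ∈ ℤ^{2n} and a ∈ ℝ^{2n}; (A3) η_A(a,a') + η_A(a+a',a'') = η_A(a',a'') + η_A(a,a'+a'') for all a, a', a'' ∈ ℝ^{2n}. -/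
open Matrix

/-- Square integer matrices of size `2n`. -/
abbrev Mat (n : ℕ) := Matrix (Fin (n + n)) (Fin (n + n)) ℤ

/-- The `2n × 2n` block matrix `[[A, B], [C, D]]`. -/
def fromB {n : ℕ} (A B C D : Matrix (Fin n) (Fin n) ℤ) : Mat n :=
  Matrix.reindex finSumFinEquiv finSumFinEquiv (Matrix.fromBlocks A B C D)

/-- The block matrix `I = [[0, Eₙ], [Eₙ, 0]]`. -/
def Imat (n : ℕ) : Mat n := fromB 0 1 1 0

/-- Membership in the integral split pseudo-orthogonal group `O^±(n,n,ℤ)`: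
`Aᵀ I A = I` or `Aᵀ I A = -I`. -/
def IsOpm (n : ℕ) (A : Mat n) : Prop :=
  Aᵀ * Imat n * A = Imat n ∨ Aᵀ * Imat n * A = -Imat n

/-- The block matrix `J = [[0, 0], [Eₙ, 0]]`. -/
def Jmat (n : ℕ) : Mat n := fromB 0 0 1 0

/-- The sign `iso(A) ∈ {1, -1}` with `Aᵀ I A = iso(A) • I` (for `A ∈ O^±(n,n,ℤ)`). -/
noncomputable def iso (n : ℕ) (A : Mat n) : ℤ :=
  if Aᵀ * Imat n * A = Imat n then 1 else -1

/-- For a (skew-symmetric) integer matrix `M`, its strictly lower triangular part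
`M_low`, with `(M_low)ᵢⱼ = Mᵢⱼ` for `i > j` and `0` otherwise. -/
def lowm {N : ℕ} (M : Matrix (Fin N) (Fin N) ℤ) : Matrix (Fin N) (Fin N) ℤ :=
  Matrix.of fun i j => if j < i then M i j else 0

/-- The diagonal of a matrix, as a vector `M^{diag}`. -/
def diagv {N : ℕ} (M : Matrix (Fin N) (Fin N) ℤ) : Fin N → ℤ := fun i => M i i

/-- The skew-symmetric matrix `B_A := iso(A)·J − Aᵀ J A`. -/
noncomputable def Bmat (n : ℕ) (A : Mat n) : Mat n := iso n A • Jmat n - Aᵀ * Jmat n * A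

/-- `η_A(a,a') := aᵀ·(B_A)_low·a'  mod ℤ`. -/
noncomputable def etaA (n : ℕ) (A : Mat n) (a a' : Fin (n + n) → ℝ) : AddCircle (1 : ℝ) :=
  ((∑ i, ∑ j, a i * ((lowm (Bmat n A)) i j : ℝ) * a' j : ℝ) : AddCircle (1 : ℝ))

/-- The bilinear form `[a,b] = aᵀ J b` on `ℝ^{2n}`. -/
def bilJ (n : ℕ) (a b : Fin (n + n) → ℝ) : ℝ :=
  ∑ i, ∑ j, a i * ((Jmat n) i j : ℝ) * b j

/-! `η_A` is the reduction mod `ℤ` of the real bilinear form whose matrix is the integer matrix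
`L = (B_A)_low`. So (A1) holds because this form is integer-valued on `ℤ^{2n}`, and (A3) is the
cocycle identity satisfied by every bilinear form. For (A2), `AᵀIA = iso(A)·I` together with
`I = J + Jᵀ` makes `B_A` skew-symmetric, hence `Lᵀ = L - B_A`; with `B_A = iso(A)·J - AᵀJA` the two
sides of (A2) then agree already in `ℝ`, for all real `m`. -/

section Forms

variable {ι : Type*} [Fintype ι]

lemma sum_mul_intCast_mul_eq_dotProduct_mulVec (M : Matrix ι ι ℤ) (a b : ι → ℝ) :
    ∑ i, ∑ j, a i * (M i j : ℝ) * b j = a ⬝ᵥ (M.map (Int.cast : ℤ → ℝ) *ᵥ b) := by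
  simp [dotProduct, mulVec, Finset.mul_sum, mul_assoc]

lemma dotProduct_mulVec_cocycle {R : Type*} [CommRing R] (M : Matrix ι ι R) (a a' a'' : ι → R) :
    a ⬝ᵥ (M *ᵥ a') + (a + a') ⬝ᵥ (M *ᵥ a'')
      = a' ⬝ᵥ (M *ᵥ a'') + a ⬝ᵥ (M *ᵥ (a' + a'')) := by
  simp only [mulVec_add, dotProduct_add, add_dotProduct]
  ring

lemma dotProduct_mulVec_comm {R : Type*} [CommRing R] (M : Matrix ι ι R) (x y : ι → R) :
    x ⬝ᵥ (M *ᵥ y) = y ⬝ᵥ (Mᵀ *ᵥ x) := by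
  rw [dotProduct_mulVec, ← mulVec_transpose, dotProduct_comm]

lemma mulVec_dotProduct_mulVec {R : Type*} [CommRing R] (A M : Matrix ι ι R) (x y : ι → R) :
    (A *ᵥ x) ⬝ᵥ (M *ᵥ (A *ᵥ y)) = x ⬝ᵥ ((Aᵀ * M * A) *ᵥ y) := by
  rw [← mulVec_mulVec, ← mulVec_mulVec, dotProduct_mulVec_comm (x := x), transpose_transpose,
    dotProduct_comm]

lemma dotProduct_mulVec_eq_sub_of_transpose_eq {R : Type*} [CommRing R] {L B : Matrix ι ι R}
    (h : Lᵀ = L - B) (x y : ι → R) :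
    x ⬝ᵥ (L *ᵥ y) = y ⬝ᵥ (L *ᵥ x) - y ⬝ᵥ (B *ᵥ x) := by
  rw [dotProduct_mulVec_comm, h, sub_mulVec, dotProduct_sub]

end Forms

lemma lowm_transpose_of_transpose_eq_neg {N : ℕ} {M : Matrix (Fin N) (Fin N) ℤ}
    (hM : Mᵀ = -M) : (lowm M)ᵀ = lowm M - M := by
  ext i j
  have hij : M j i = -M i j := by simpa using congr_fun₂ hM i j
  simp only [transpose_apply, Matrix.sub_apply, lowm, of_apply]
  rcases lt_trichotomy i j with h | rfl | h
  · simp [h, h.not_gt, hij]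
  · simp only [lt_irrefl, if_false]
    omega
  · simp [h, h.not_gt]

lemma Imat_eq_Jmat_add_transpose (n : ℕ) : Imat n = Jmat n + (Jmat n)ᵀ := by
  ext i j
  simp only [Imat, Jmat, fromB, reindex_apply, submatrix_apply, transpose_apply, Matrix.add_apply]
  rcases finSumFinEquiv.symm i with a | a <;> rcases finSumFinEquiv.symm j with b | b <;>
    simp [one_apply, eq_comm]

lemma transpose_mul_Imat_mul_eq_iso_smul {n : ℕ} {A : Mat n} (hA : IsOpm n A) :
    Aᵀ * Imat n * A = iso n A • Imat n := by
  unfold iso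
  split_ifs with h
  · simpa using h
  · simpa using hA.resolve_left h

lemma Bmat_transpose {n : ℕ} {A : Mat n} (hA : IsOpm n A) : (Bmat n A)ᵀ = -Bmat n A := by
  have hJt : (Jmat n)ᵀ = Imat n - Jmat n := by rw [Imat_eq_Jmat_add_transpose, add_sub_cancel_left]
  have hI := transpose_mul_Imat_mul_eq_iso_smul hA
  rw [Bmat, transpose_sub, transpose_smul, transpose_mul, transpose_mul, transpose_transpose, hJt,
    sub_mul, mul_sub, ← mul_assoc, ← mul_assoc, hI, Imat_eq_Jmat_add_transpose]
  module

lemma Bmat_map (n : ℕ) (A : Mat n) :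
    (Bmat n A).map (Int.cast : ℤ → ℝ)
      = (iso n A : ℝ) • (Jmat n).map (Int.cast : ℤ → ℝ)
        - (A.map (Int.cast : ℤ → ℝ))ᵀ * (Jmat n).map (Int.cast : ℤ → ℝ)
          * A.map (Int.cast : ℤ → ℝ) := by
  ext i j
  simp only [Bmat, map_apply, Matrix.sub_apply, Matrix.smul_apply, smul_eq_mul, mul_apply,
    transpose_apply]
  push_cast
  rfl

section Opm

variable {n : ℕ} {A : Mat n}

lemma etaA_eq_coe_dotProduct (a b : Fin (n + n) → ℝ) :
    etaA n A a b
      = ((a ⬝ᵥ ((lowm (Bmat n A)).map (Int.cast : ℤ → ℝ) *ᵥ b) : ℝ) : AddCircle (1 : ℝ)) := by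
  rw [etaA, sum_mul_intCast_mul_eq_dotProduct_mulVec]

lemma etaA_intCast (m m' : Fin (n + n) → ℤ) :
    etaA n A (fun i => (m i : ℝ)) (fun i => (m' i : ℝ)) = 0 := by
  rw [etaA, AddCircle.coe_eq_zero_iff]
  exact ⟨∑ i, ∑ j, m i * lowm (Bmat n A) i j * m' j, by simp⟩

lemma lowm_Bmat_map_transpose (hA : IsOpm n A) :
    ((lowm (Bmat n A)).map (Int.cast : ℤ → ℝ))ᵀ
      = (lowm (Bmat n A)).map (Int.cast : ℤ → ℝ) - (Bmat n A).map (Int.cast : ℤ → ℝ) := by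
  rw [← transpose_map, lowm_transpose_of_transpose_eq_neg (Bmat_transpose hA)]
  exact Matrix.map_sub _ Int.cast_sub _ _

lemma dotProduct_lowm_Bmat_mulVec_swap (hA : IsOpm n A) (x y : Fin (n + n) → ℝ) :
    x ⬝ᵥ ((lowm (Bmat n A)).map (Int.cast : ℤ → ℝ) *ᵥ y)
        + (iso n A : ℝ) * (y ⬝ᵥ ((Jmat n).map (Int.cast : ℤ → ℝ) *ᵥ x))
      = y ⬝ᵥ ((lowm (Bmat n A)).map (Int.cast : ℤ → ℝ) *ᵥ x)
        + (A.map (Int.cast : ℤ → ℝ) *ᵥ y) ⬝ᵥ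
            ((Jmat n).map (Int.cast : ℤ → ℝ) *ᵥ (A.map (Int.cast : ℤ → ℝ) *ᵥ x)) := by
  rw [dotProduct_mulVec_eq_sub_of_transpose_eq (lowm_Bmat_map_transpose hA), Bmat_map, sub_mulVec,
    smul_mulVec, dotProduct_sub, dotProduct_smul, mulVec_dotProduct_mulVec, smul_eq_mul]
  ring

end Opm

theorem statement9_general (n : ℕ) (A : Mat n) (hA : IsOpm n A) :
    (∀ m m' : Fin (n + n) → ℤ,
      etaA n A (fun i => (m i : ℝ)) (fun i => (m' i : ℝ)) = 0) ∧
    (∀ (m : Fin (n + n) → ℤ) (a : Fin (n + n) → ℝ),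
      etaA n A (fun i => (m i : ℝ)) a
          + (((iso n A : ℝ) * bilJ n a (fun i => (m i : ℝ)) : ℝ) : AddCircle (1 : ℝ))
        = etaA n A a (fun i => (m i : ℝ))
          + ((bilJ n ((A.map (Int.cast : ℤ → ℝ)).mulVec a)
              ((A.map (Int.cast : ℤ → ℝ)).mulVec (fun i => (m i : ℝ))) : ℝ)
                : AddCircle (1 : ℝ))) ∧
    (∀ a a' a'' : Fin (n + n) → ℝ,
      etaA n A a a' + etaA n A (a + a') a''
        = etaA n A a' a'' + etaA n A a (a' + a'')) := by
  refine ⟨etaA_intCast, fun m a => ?_, fun a a' a'' => ?_⟩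
  · simp only [etaA_eq_coe_dotProduct, bilJ, sum_mul_intCast_mul_eq_dotProduct_mulVec,
      ← AddCircle.coe_add, dotProduct_lowm_Bmat_mulVec_swap hA]
  · simp only [etaA_eq_coe_dotProduct, ← AddCircle.coe_add, dotProduct_mulVec_cocycle]

/-- For `A ∈ O^±(n,n,ℤ)` the pair `(A, η_A)` satisfies the object axioms:
(A1) `η_A(m,m') = 0` for `m, m' ∈ ℤ^{2n}`;
(A2) `η_A(m,a) + iso(A)·(aᵀJm mod ℤ) = η_A(a,m) + ((Aa)ᵀJ(Am) mod ℤ)`;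
(A3) `η_A(a,a') + η_A(a+a',a'') = η_A(a',a'') + η_A(a,a'+a'')`. -/
theorem statement9 (n : ℕ) (hn : 1 ≤ n) (A : Mat n) (hA : IsOpm n A) :
    (∀ m m' : Fin (n + n) → ℤ,
      etaA n A (fun i => (m i : ℝ)) (fun i => (m' i : ℝ)) = 0) ∧
    (∀ (m : Fin (n + n) → ℤ) (a : Fin (n + n) → ℝ),
      etaA n A (fun i => (m i : ℝ)) a
          + (((iso n A : ℝ) * bilJ n a (fun i => (m i : ℝ)) : ℝ) : AddCircle (1 : ℝ))
        = etaA n A a (fun i => (m i : ℝ))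
          + ((bilJ n ((A.map (Int.cast : ℤ → ℝ)).mulVec a)
              ((A.map (Int.cast : ℤ → ℝ)).mulVec (fun i => (m i : ℝ))) : ℝ)
                : AddCircle (1 : ℝ))) ∧
    (∀ a a' a'' : Fin (n + n) → ℝ,
      etaA n A a a' + etaA n A (a + a') a''
        = etaA n A a' a'' + etaA n A a (a' + a'')) :=
  statement9_general n A hA
end

section
/- Let n ≥ 1. For every A ∈ GL(n,ℤ), the matrix B_{D_A} vanishes, where D_A := [[A,0],[0,(Aᵀ)⁻¹]] ∈ O(n,n,ℤ); consequently the 3-cocycle m vanishes on the subgroup D(GL(n,ℤ)): m_{D_A, D_B, D_C} = 0 for all A, B, C ∈ GL(n,ℤ). -/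
open Matrix

/-- The integer vector `-2·m_{A,B,C}`. -/
noncomputable def mint (n : ℕ) (A B C : Mat n) : Fin (n + n) → ℤ :=
  ((A⁻¹)ᵀ * (B⁻¹)ᵀ * (C⁻¹)ᵀ).mulVec
    (Cᵀ.mulVec (diagv (Bᵀ * lowm (Bmat n A) * B))
      + diagv (Cᵀ * lowm (Bmat n (A * B)) * C)
      - iso n A • diagv (Cᵀ * lowm (Bmat n B) * C)
      - diagv (Cᵀ * Bᵀ * lowm (Bmat n A) * B * C))

/-- The 3-cocycle
`m_{A,B,C} := −(1/2)·(A⁻¹)ᵀ(B⁻¹)ᵀ(C⁻¹)ᵀ·( Cᵀ·(Bᵀ(B_A)_low B)^{diag} + (Cᵀ(B_{AB})_low C)^{diag}`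
`− iso(A)·(Cᵀ(B_B)_low C)^{diag} − (CᵀBᵀ(B_A)_low B C)^{diag} )` as a vector in `ℝ^{2n}`. -/
noncomputable def mvec (n : ℕ) (A B C : Mat n) : Fin (n + n) → ℝ :=
  fun i => -(1 / 2 : ℝ) * (mint n A B C i : ℝ)

/-- The block matrix `D_A := [[A,0],[0,(Aᵀ)⁻¹]]`. -/
noncomputable def Dmat (n : ℕ) (A : Matrix (Fin n) (Fin n) ℤ) : Mat n :=
  fromB A 0 0 (Aᵀ)⁻¹

/-
`D_A` preserves both `I` and `J`, so `B_{D_A} = J − J = 0`; as `D` is multiplicative,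
`B_{D_A}`, `B_{D_B}` and `B_{D_A D_B} = B_{D_{AB}}` all vanish, and every term of `m` contains one
of them.
-/

lemma fromB_mul_fromB {n : ℕ} (A B C D A' B' C' D' : Matrix (Fin n) (Fin n) ℤ) :
    fromB A B C D * fromB A' B' C' D' =
      fromB (A * A' + B * C') (A * B' + B * D') (C * A' + D * C') (C * B' + D * D') := by
  simp [fromB, Matrix.submatrix_mul_equiv, Matrix.fromBlocks_multiply]

lemma transpose_fromB {n : ℕ} (A B C D : Matrix (Fin n) (Fin n) ℤ) :
    (fromB A B C D)ᵀ = fromB Aᵀ Cᵀ Bᵀ Dᵀ := by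
  simp [fromB, Matrix.transpose_submatrix, Matrix.fromBlocks_transpose]

lemma Dmat_transpose {n : ℕ} (A : Matrix (Fin n) (Fin n) ℤ) :
    (Dmat n A)ᵀ = fromB Aᵀ 0 0 A⁻¹ := by
  simp [Dmat, transpose_fromB, Matrix.transpose_nonsing_inv]

lemma Dmat_mul_Dmat {n : ℕ} (A B : Matrix (Fin n) (Fin n) ℤ) :
    Dmat n A * Dmat n B = Dmat n (A * B) := by
  simp [Dmat, fromB_mul_fromB, Matrix.transpose_mul, Matrix.mul_inv_rev]

section Invertible

variable {n : ℕ} {A : Matrix (Fin n) (Fin n) ℤ}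

lemma Dmat_transpose_mul_Imat_mul_self (hA : IsUnit A.det) :
    (Dmat n A)ᵀ * Imat n * Dmat n A = Imat n := by
  rw [Dmat_transpose, Imat, Dmat, fromB_mul_fromB, fromB_mul_fromB]
  simp [Matrix.mul_nonsing_inv _ (A.det_transpose ▸ hA), Matrix.nonsing_inv_mul _ hA]

lemma Dmat_transpose_mul_Jmat_mul_self (hA : IsUnit A.det) :
    (Dmat n A)ᵀ * Jmat n * Dmat n A = Jmat n := by
  rw [Dmat_transpose, Jmat, Dmat, fromB_mul_fromB, fromB_mul_fromB]
  simp [Matrix.nonsing_inv_mul _ hA]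

lemma iso_Dmat (hA : IsUnit A.det) : iso n (Dmat n A) = 1 :=
  if_pos (Dmat_transpose_mul_Imat_mul_self hA)

lemma Bmat_Dmat (hA : IsUnit A.det) : Bmat n (Dmat n A) = 0 := by
  rw [Bmat, iso_Dmat hA, Dmat_transpose_mul_Jmat_mul_self hA, one_smul, sub_self]

end Invertible

lemma mint_eq_zero_of_Bmat_eq_zero {n : ℕ} {A B : Mat n} (C : Mat n) (hA : Bmat n A = 0)
    (hB : Bmat n B = 0) (hAB : Bmat n (A * B) = 0) : mint n A B C = 0 := by
  have hlow : lowm (0 : Mat n) = 0 := by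
    ext i j
    simp [lowm]
  have hdiag : diagv (0 : Mat n) = 0 := rfl
  simp [mint, hA, hB, hAB, hlow, hdiag]

theorem statement16_general (n : ℕ) (A B C : Matrix (Fin n) (Fin n) ℤ)
    (hA : IsUnit A.det) (hB : IsUnit B.det) :
    Bmat n (Dmat n A) = 0 ∧ mvec n (Dmat n A) (Dmat n B) (Dmat n C) = 0 := by
  have hAB : IsUnit (A * B).det := (A.det_mul B).symm ▸ hA.mul hB
  have hmint : mint n (Dmat n A) (Dmat n B) (Dmat n C) = 0 :=
    mint_eq_zero_of_Bmat_eq_zero _ (Bmat_Dmat hA) (Bmat_Dmat hB)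
      (by rw [Dmat_mul_Dmat]; exact Bmat_Dmat hAB)
  refine ⟨Bmat_Dmat hA, ?_⟩
  funext i
  simp [mvec, hmint]

/-- For every `A ∈ GL(n,ℤ)`, the matrix `B_{D_A}` vanishes, where
`D_A := [[A,0],[0,(Aᵀ)⁻¹]] ∈ O(n,n,ℤ)`; consequently the 3-cocycle `m` vanishes on the
subgroup `D(GL(n,ℤ))`: `m_{D_A,D_B,D_C} = 0` for all `A, B, C ∈ GL(n,ℤ)`. -/
theorem statement16 (n : ℕ) (hn : 1 ≤ n) (A B C : Matrix (Fin n) (Fin n) ℤ)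
    (hA : IsUnit A.det) (hB : IsUnit B.det) (hC : IsUnit C.det) :
    Bmat n (Dmat n A) = 0 ∧ mvec n (Dmat n A) (Dmat n B) (Dmat n C) = 0 :=
  statement16_general n A B C hA hB
end

section
/- Let n ≥ 1. The 3-cocycle m vanishes on the subgroup e(so(n,ℤ)) ⊂ O(n,n,ℤ): for all skew-symmetric matrices A, B, C ∈ ℤ^{n×n}, one has m_{e^A, e^B, e^C} = 0, where e^B := [[Eₙ,0],[B,Eₙ]]. Moreover (B_{e^A·e^B})_low = (e^B)ᵀ·(B_{e^A})_low·e^B + (B_{e^B})_low for all skew-symmetric A, B ∈ ℤ^{n×n}. -/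
/-! For skew-symmetric `A`, `e^A` preserves `I`, so `iso(e^A) = 1` and `B_{e^A}` is the block
matrix `[[A, 0], [0, 0]]`. Its strictly lower part `[[A_low, 0], [0, 0]]` has zero diagonal and is
fixed by the congruence `X ↦ (e^B)ᵀ X e^B` for every `B`. Since `e^A e^B = e^{A+B}` and `M ↦ M_low`
is additive, the identity for `(B_{e^A e^B})_low` follows, and each of the four diagonal vectors
in `m_{e^A,e^B,e^C}` vanishes. -/

open Matrix

/-- The block matrix `e^B = [[Eₙ, 0], [B, Eₙ]]`. -/
def expB (n : ℕ) (B : Matrix (Fin n) (Fin n) ℤ) : Mat n := fromB 1 0 B 1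


section BlockMatrices

variable {n : ℕ}

lemma fromB_apply_castAdd_castAdd (A B C D : Matrix (Fin n) (Fin n) ℤ) (a b : Fin n) :
    fromB A B C D (Fin.castAdd n a) (Fin.castAdd n b) = A a b := by
  simp only [fromB, reindex_apply, submatrix_apply, finSumFinEquiv_symm_apply_castAdd,
    fromBlocks_apply₁₁]

lemma fromB_apply_castAdd_natAdd (A B C D : Matrix (Fin n) (Fin n) ℤ) (a b : Fin n) :
    fromB A B C D (Fin.castAdd n a) (Fin.natAdd n b) = B a b := by
  simp only [fromB, reindex_apply, submatrix_apply, finSumFinEquiv_symm_apply_castAdd,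
    finSumFinEquiv_symm_apply_natAdd, fromBlocks_apply₁₂]

lemma fromB_apply_natAdd_castAdd (A B C D : Matrix (Fin n) (Fin n) ℤ) (a b : Fin n) :
    fromB A B C D (Fin.natAdd n a) (Fin.castAdd n b) = C a b := by
  simp only [fromB, reindex_apply, submatrix_apply, finSumFinEquiv_symm_apply_castAdd,
    finSumFinEquiv_symm_apply_natAdd, fromBlocks_apply₂₁]

lemma fromB_apply_natAdd_natAdd (A B C D : Matrix (Fin n) (Fin n) ℤ) (a b : Fin n) :
    fromB A B C D (Fin.natAdd n a) (Fin.natAdd n b) = D a b := by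
  simp only [fromB, reindex_apply, submatrix_apply, finSumFinEquiv_symm_apply_natAdd,
    fromBlocks_apply₂₂]

lemma fromB_mul (A B C D E F G H : Matrix (Fin n) (Fin n) ℤ) :
    fromB A B C D * fromB E F G H =
      fromB (A * E + B * G) (A * F + B * H) (C * E + D * G) (C * F + D * H) := by
  simp only [fromB, reindex_apply, submatrix_mul_equiv, fromBlocks_multiply]

lemma fromB_transpose (A B C D : Matrix (Fin n) (Fin n) ℤ) :
    (fromB A B C D)ᵀ = fromB Aᵀ Cᵀ Bᵀ Dᵀ := by
  simp only [fromB, reindex_apply, transpose_submatrix, fromBlocks_transpose]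

lemma fromB_add (A B C D E F G H : Matrix (Fin n) (Fin n) ℤ) :
    fromB A B C D + fromB E F G H = fromB (A + E) (B + F) (C + G) (D + H) := by
  ext i j
  simp only [fromB, reindex_apply, submatrix_apply, Matrix.add_apply]
  rcases finSumFinEquiv.symm i with a | a <;> rcases finSumFinEquiv.symm j with b | b <;> rfl

lemma fromB_sub (A B C D E F G H : Matrix (Fin n) (Fin n) ℤ) :
    fromB A B C D - fromB E F G H = fromB (A - E) (B - F) (C - G) (D - H) := by
  ext i j
  simp only [fromB, reindex_apply, submatrix_apply, Matrix.sub_apply]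
  rcases finSumFinEquiv.symm i with a | a <;> rcases finSumFinEquiv.symm j with b | b <;> rfl

lemma lowm_add {N : ℕ} (M P : Matrix (Fin N) (Fin N) ℤ) :
    lowm (M + P) = lowm M + lowm P := by
  ext i j
  simp only [lowm, of_apply, Matrix.add_apply]
  split_ifs <;> simp

lemma lowm_fromB (M : Matrix (Fin n) (Fin n) ℤ) :
    lowm (fromB M 0 0 0) = fromB (lowm M) 0 0 0 := by
  ext i j
  refine Fin.addCases (fun a => ?_) (fun a => ?_) i <;>
    refine Fin.addCases (fun b => ?_) (fun b => ?_) j <;>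
    simp only [lowm, of_apply, fromB_apply_castAdd_castAdd, fromB_apply_castAdd_natAdd,
      fromB_apply_natAdd_castAdd, fromB_apply_natAdd_natAdd, Fin.lt_def, Fin.val_castAdd,
      Fin.val_natAdd] <;> simp

lemma diagv_fromB_lowm (M : Matrix (Fin n) (Fin n) ℤ) :
    diagv (fromB (lowm M) 0 0 0) = 0 := by
  funext i
  refine Fin.addCases (fun a => ?_) (fun a => ?_) i <;>
    simp only [diagv, lowm, of_apply, fromB_apply_castAdd_castAdd, fromB_apply_natAdd_natAdd,
      lt_irrefl, if_false, Pi.zero_apply, Matrix.zero_apply]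

lemma expB_transpose (A : Matrix (Fin n) (Fin n) ℤ) : (expB n A)ᵀ = fromB 1 Aᵀ 0 1 := by
  simp [expB, fromB_transpose]

lemma expB_mul_expB (A B : Matrix (Fin n) (Fin n) ℤ) :
    expB n A * expB n B = expB n (A + B) := by
  simp [expB, fromB_mul]

lemma expB_transpose_mul_fromB_mul_expB (L B : Matrix (Fin n) (Fin n) ℤ) :
    (expB n B)ᵀ * fromB L 0 0 0 * expB n B = fromB L 0 0 0 := by
  rw [expB_transpose, expB, fromB_mul, fromB_mul]
  simp

section Skew

variable {A : Matrix (Fin n) (Fin n) ℤ}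

lemma iso_expB (hA : Aᵀ = -A) : iso n (expB n A) = 1 := by
  rw [iso, if_pos]
  rw [expB_transpose, Imat, expB, fromB_mul, fromB_mul, hA]
  simp

lemma Bmat_expB (hA : Aᵀ = -A) : Bmat n (expB n A) = fromB A 0 0 0 := by
  rw [Bmat, iso_expB hA, one_smul, expB_transpose, Jmat, expB, fromB_mul, fromB_mul, fromB_sub, hA]
  simp

lemma lowm_Bmat_expB (hA : Aᵀ = -A) : lowm (Bmat n (expB n A)) = fromB (lowm A) 0 0 0 := by
  rw [Bmat_expB hA, lowm_fromB]

lemma expB_transpose_mul_lowm_Bmat_expB_mul_expB (hA : Aᵀ = -A) (B : Matrix (Fin n) (Fin n) ℤ) :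
    (expB n B)ᵀ * lowm (Bmat n (expB n A)) * expB n B = lowm (Bmat n (expB n A)) := by
  rw [lowm_Bmat_expB hA, expB_transpose_mul_fromB_mul_expB]

lemma diagv_lowm_Bmat_expB (hA : Aᵀ = -A) : diagv (lowm (Bmat n (expB n A))) = 0 := by
  rw [lowm_Bmat_expB hA, diagv_fromB_lowm]

end Skew

end BlockMatrices

theorem statement17_general (n : ℕ) :
    (∀ A B C : Matrix (Fin n) (Fin n) ℤ, Aᵀ = -A → Bᵀ = -B → Cᵀ = -C →
      mvec n (expB n A) (expB n B) (expB n C) = 0) ∧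
    (∀ A B : Matrix (Fin n) (Fin n) ℤ, Aᵀ = -A → Bᵀ = -B →
      lowm (Bmat n (expB n A * expB n B))
        = (expB n B)ᵀ * lowm (Bmat n (expB n A)) * expB n B
          + lowm (Bmat n (expB n B))) := by
  have skew_add {A B : Matrix (Fin n) (Fin n) ℤ} (hA : Aᵀ = -A) (hB : Bᵀ = -B) :
      (A + B)ᵀ = -(A + B) := by
    rw [transpose_add, hA, hB, neg_add]
  refine ⟨fun A B C hA hB _ => ?_, fun A B hA hB => ?_⟩
  · have hBC : (expB n C)ᵀ * (expB n B)ᵀ * lowm (Bmat n (expB n A)) * expB n B * expB n C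
        = (expB n C)ᵀ * ((expB n B)ᵀ * lowm (Bmat n (expB n A)) * expB n B) * expB n C := by
      simp only [Matrix.mul_assoc]
    have hmint : mint n (expB n A) (expB n B) (expB n C) = 0 := by
      simp only [mint, hBC, expB_mul_expB, expB_transpose_mul_lowm_Bmat_expB_mul_expB hA,
        expB_transpose_mul_lowm_Bmat_expB_mul_expB hB,
        expB_transpose_mul_lowm_Bmat_expB_mul_expB (skew_add hA hB),
        diagv_lowm_Bmat_expB hA, diagv_lowm_Bmat_expB hB, diagv_lowm_Bmat_expB (skew_add hA hB),
        mulVec_zero, smul_zero, add_zero, sub_zero]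
    funext i
    simp [mvec, hmint]
  · rw [expB_mul_expB, expB_transpose_mul_lowm_Bmat_expB_mul_expB hA, lowm_Bmat_expB hA,
      lowm_Bmat_expB hB, lowm_Bmat_expB (skew_add hA hB), lowm_add, fromB_add, add_zero]

/-- The 3-cocycle `m` vanishes on the subgroup `e(so(n,ℤ)) ⊂ O(n,n,ℤ)`:
`m_{e^A,e^B,e^C} = 0` for all skew-symmetric `A, B, C ∈ ℤ^{n×n}`. Moreover
`(B_{e^A·e^B})_low = (e^B)ᵀ·(B_{e^A})_low·e^B + (B_{e^B})_low` for all skew-symmetric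
`A, B ∈ ℤ^{n×n}`. -/
theorem statement17 (n : ℕ) (hn : 1 ≤ n) :
    (∀ A B C : Matrix (Fin n) (Fin n) ℤ, Aᵀ = -A → Bᵀ = -B → Cᵀ = -C →
      mvec n (expB n A) (expB n B) (expB n C) = 0) ∧
    (∀ A B : Matrix (Fin n) (Fin n) ℤ, Aᵀ = -A → Bᵀ = -B →
      lowm (Bmat n (expB n A * expB n B))
        = (expB n B)ᵀ * lowm (Bmat n (expB n A)) * expB n B
          + lowm (Bmat n (expB n B))) :=
  statement17_general n
end

section
/- Let n ≥ 1, and for 1 ≤ i ≤ n let V_i ∈ GL(2n,ℤ) be the permutation matrix exchanging the i-th and (i+n)-th coordinates and fixing all others. Let V be the subgroup of GL(2n,ℤ) generated by V_1, …, V_n. Then V ⊆ O(n,n,ℤ), and the 3-cocycle m vanishes on V: for all A, B, C ∈ V, one has m_{A,B,C} = 0. -/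
open Matrix

/-- The permutation matrix `V_i` exchanging the `i`-th and `(i+n)`-th coordinates and
fixing all others. -/
def Vmat (n : ℕ) (i : Fin n) : Mat n :=
  Matrix.of fun j k =>
    if Equiv.swap (finSumFinEquiv (Sum.inl i)) (finSumFinEquiv (Sum.inr i)) j = k
    then (1 : ℤ) else 0


section Aux

/-- Permutation matrix of a permutation `σ`. -/
def permM {N : ℕ} (σ : Equiv.Perm (Fin N)) : Matrix (Fin N) (Fin N) ℤ :=
  Matrix.of fun j k => if σ j = k then 1 else 0

lemma permM_one {N : ℕ} : permM (1 : Equiv.Perm (Fin N)) = 1 := by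
  ext j k; simp [permM, Matrix.one_apply]; congr

lemma permM_mul {N : ℕ} (σ τ : Equiv.Perm (Fin N)) :
    permM σ * permM τ = permM (σ.trans τ) := by
  ext j k
  simp only [permM, Matrix.mul_apply, Matrix.of_apply, ite_mul, one_mul, zero_mul,
    Equiv.trans_apply]
  rw [Finset.sum_ite_eq (Finset.univ) (σ j) (fun x => if τ x = k then (1:ℤ) else 0)]
  simp; congr

lemma permM_transpose {N : ℕ} (σ : Equiv.Perm (Fin N)) :
    (permM σ)ᵀ = permM σ⁻¹ := by
  ext j k
  simp only [permM, Matrix.transpose_apply, Matrix.of_apply]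
  rcases eq_or_ne (σ k) j with h | h
  · have h2 : σ⁻¹ j = k := by rw [← h]; simp
    simp [h, h2]
  · have h2 : σ⁻¹ j ≠ k := fun hh => h (by rw [← hh]; simp)
    simp [h, h2]; exact h2

lemma mul_permM_apply {N : ℕ} (M : Matrix (Fin N) (Fin N) ℤ) (σ : Equiv.Perm (Fin N))
    (j k : Fin N) : (M * permM σ) j k = M j (σ⁻¹ k) := by
  simp only [permM, Matrix.mul_apply, Matrix.of_apply, mul_ite, mul_one, mul_zero]
  have : ∀ x : Fin N, (σ x = k) ↔ (x = σ⁻¹ k) := fun x => by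
    constructor
    · intro h; rw [← h]; simp
    · intro h; rw [h]; simp
  simp only [this]
  simp [Finset.sum_ite_eq']

lemma permM_mul_apply {N : ℕ} (M : Matrix (Fin N) (Fin N) ℤ) (σ : Equiv.Perm (Fin N))
    (j k : Fin N) : (permM σ * M) j k = M (σ j) k := by
  simp only [permM, Matrix.mul_apply, Matrix.of_apply, ite_mul, one_mul, zero_mul]
  simp [Finset.sum_ite_eq]

/-- Conjugation by a permutation matrix preserves vanishing of the diagonal. -/
lemma diag_conj {N : ℕ} (σ : Equiv.Perm (Fin N)) (L : Matrix (Fin N) (Fin N) ℤ)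
    (hL : ∀ j, L j j = 0) (j : Fin N) : ((permM σ)ᵀ * L * permM σ) j j = 0 := by
  rw [permM_transpose, mul_permM_apply, permM_mul_apply]
  exact hL _

/-- The global swap permutation exchanging the two blocks. -/
def tauP (n : ℕ) : Equiv.Perm (Fin (n + n)) :=
  finSumFinEquiv.symm.trans ((Equiv.sumComm (Fin n) (Fin n)).trans finSumFinEquiv)

lemma Imat_eq (n : ℕ) : Imat n = permM (tauP n) := by
  ext j k
  obtain ⟨x, rfl⟩ := finSumFinEquiv.surjective j
  obtain ⟨y, rfl⟩ := finSumFinEquiv.surjective k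
  simp only [Imat, fromB, permM, tauP, Matrix.reindex_apply, Matrix.submatrix_apply,
    Equiv.symm_apply_apply, Equiv.trans_apply, Equiv.sumComm_apply, Matrix.of_apply,
    Equiv.apply_eq_iff_eq]
  rcases x with a | a <;> rcases y with b | b <;>
    simp [Matrix.fromBlocks, Matrix.one_apply, eq_comm]

lemma Vmat_eq (n : ℕ) (i : Fin n) :
    Vmat n i = permM (Equiv.swap (finSumFinEquiv (Sum.inl i)) (finSumFinEquiv (Sum.inr i))) :=
  rfl

lemma tau_swap_comm (n : ℕ) (i : Fin n) :
    Equiv.swap (finSumFinEquiv (Sum.inl i)) (finSumFinEquiv (Sum.inr i)) * tauP n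
      = tauP n * Equiv.swap (finSumFinEquiv (Sum.inl i)) (finSumFinEquiv (Sum.inr i)) := by
  have h1 : tauP n (finSumFinEquiv (Sum.inl i)) = finSumFinEquiv (Sum.inr i) := by
    simp only [tauP, Equiv.trans_apply, Equiv.symm_apply_apply, Equiv.sumComm_apply,
      Sum.swap_inl]
  have h2 : tauP n (finSumFinEquiv (Sum.inr i)) = finSumFinEquiv (Sum.inl i) := by
    simp only [tauP, Equiv.trans_apply, Equiv.symm_apply_apply, Equiv.sumComm_apply,
      Sum.swap_inr]
  have key := Equiv.swap_apply_apply (tauP n) (finSumFinEquiv (Sum.inl i))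
    (finSumFinEquiv (Sum.inr i))
  rw [h1, h2, Equiv.swap_comm] at key
  calc Equiv.swap (finSumFinEquiv (Sum.inl i)) (finSumFinEquiv (Sum.inr i)) * tauP n
      = tauP n * Equiv.swap (finSumFinEquiv (Sum.inl i)) (finSumFinEquiv (Sum.inr i))
        * (tauP n)⁻¹ * tauP n := by rw [← key]
    _ = _ := by group

lemma lowm_diag {N : ℕ} (M : Matrix (Fin N) (Fin N) ℤ) (j : Fin N) : lowm M j j = 0 := by
  simp [lowm]

end Aux

/-- Let `V` be the subgroup generated by `V_1, …, V_n` (since each `V_i`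
is an involution, it coincides with the multiplicative closure of `{V_1, …, V_n}`).
Then `V ⊆ O(n,n,ℤ)`, and the 3-cocycle `m` vanishes on `V`: `m_{A,B,C} = 0` for all
`A, B, C ∈ V`. -/
theorem statement19 (n : ℕ) (hn : 1 ≤ n) :
    (∀ A ∈ Submonoid.closure (Set.range (Vmat n)),
      Aᵀ * Imat n * A = Imat n) ∧
    (∀ A B C : Mat n,
      A ∈ Submonoid.closure (Set.range (Vmat n)) →
      B ∈ Submonoid.closure (Set.range (Vmat n)) →
      C ∈ Submonoid.closure (Set.range (Vmat n)) →
      mvec n A B C = 0) := by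
  have key : ∀ A ∈ Submonoid.closure (Set.range (Vmat n)),
      ∃ σ : Equiv.Perm (Fin (n + n)), σ * tauP n = tauP n * σ ∧ A = permM σ := by
    intro A hA
    induction hA using Submonoid.closure_induction with
    | mem x hx =>
      obtain ⟨i, rfl⟩ := hx
      exact ⟨_, tau_swap_comm n i, Vmat_eq n i⟩
    | one => exact ⟨1, by group, permM_one.symm⟩
    | mul x y hx hy ihx ihy =>
      obtain ⟨σ, hσ, rfl⟩ := ihx
      obtain ⟨ρ, hρ, rfl⟩ := ihy
      refine ⟨σ.trans ρ, ?_, permM_mul σ ρ⟩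
      show ρ * σ * tauP n = tauP n * (ρ * σ)
      calc ρ * σ * tauP n = ρ * (σ * tauP n) := by rw [mul_assoc]
        _ = ρ * (tauP n * σ) := by rw [hσ]
        _ = ρ * tauP n * σ := by rw [mul_assoc]
        _ = tauP n * ρ * σ := by rw [hρ]
        _ = tauP n * (ρ * σ) := by rw [mul_assoc]
  have part1 : ∀ A ∈ Submonoid.closure (Set.range (Vmat n)),
      Aᵀ * Imat n * A = Imat n := by
    intro A hA
    obtain ⟨σ, hc, rfl⟩ := key A hA
    rw [Imat_eq, permM_transpose, permM_mul, permM_mul]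
    have he : (σ⁻¹.trans (tauP n)).trans σ = tauP n := by
      have hd : (σ⁻¹.trans (tauP n)).trans σ = σ * tauP n * σ⁻¹ := rfl
      rw [hd, hc, mul_inv_cancel_right]
    rw [he]
  refine ⟨part1, ?_⟩
  intro A B C hA hB hC
  obtain ⟨α, hαc, hAe⟩ := key A hA
  obtain ⟨β, hβc, hBe⟩ := key B hB
  obtain ⟨γ, hγc, hCe⟩ := key C hC
  have h1 : diagv (Bᵀ * lowm (Bmat n A) * B) = 0 := by
    funext j
    rw [hBe]
    exact diag_conj β _ (lowm_diag _) j
  have h2 : diagv (Cᵀ * lowm (Bmat n (A * B)) * C) = 0 := by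
    funext j
    rw [hCe]
    exact diag_conj γ _ (lowm_diag _) j
  have h3 : diagv (Cᵀ * lowm (Bmat n B) * C) = 0 := by
    funext j
    rw [hCe]
    exact diag_conj γ _ (lowm_diag _) j
  have hre : Cᵀ * Bᵀ * lowm (Bmat n A) * B * C
      = (B * C)ᵀ * lowm (Bmat n A) * (B * C) := by
    simp only [Matrix.transpose_mul, mul_assoc]
  have h4 : diagv (Cᵀ * Bᵀ * lowm (Bmat n A) * B * C) = 0 := by
    funext j
    rw [hre, hBe, hCe, permM_mul]
    exact diag_conj (β.trans γ) _ (lowm_diag _) j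
  have hm : mint n A B C = 0 := by
    unfold mint
    rw [h1, h2, h3, h4, Matrix.mulVec_zero, smul_zero]
    simp
  funext i
  simp [mvec, hm]
end
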